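/- arXiv:2207.06906 — 3 statements merged into one kernel-verified Lean document; each statement's English description precedes it below -/
import Mathlib

section
/- If G1 and G2 are quasi-monomial finite groups, then the direct product G1 × G2 is quasi-monomial. -/
open scoped Classical

noncomputable section

/-- The usual inner product of complex-valued class functions on a finite group. -/
def charInner (G : Type) [Group G] [Finite G] (χ φ : G → ℂ) : ℂ :=
  (Nat.card G : ℂ)⁻¹ * ∑ᶠ g : G, χ g * (starRingEnd ℂ) (φ g)

/-- `χ` is an irreducible complex character of `G`, i.e. the character of a simple
finite-dimensional complex representation of `G`. -/
def IsIrreducibleChar (G : Type) [Group G] (χ : G → ℂ) : Prop :=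
  ∃ V : FDRep ℂ G, CategoryTheory.Simple V ∧ χ = V.character

/-- The character of `G` induced by a function `θ` on a subgroup `H ≤ G`:
`θ^G(g) = |H|⁻¹ ∑_{x ∈ G} θ⁰(x g x⁻¹)`. -/
def indChar {G : Type} [Group G] [Finite G] (H : Subgroup G) (θ : H → ℂ) : G → ℂ :=
  fun g => (Nat.card H : ℂ)⁻¹ *
    ∑ᶠ x : G, if h : x * g * x⁻¹ ∈ H then θ ⟨x * g * x⁻¹, h⟩ else 0

/-- `χ` is a constituent of `ψ`, i.e. `⟨ψ, χ⟩ ≠ 0` (for genuine characters this inner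
product is a nonnegative integer, so this says `⟨ψ, χ⟩ > 0`). -/
def IsConstituent (G : Type) [Group G] [Finite G] (ψ χ : G → ℂ) : Prop :=
  charInner G ψ χ ≠ 0

/-- A character `χ` of `G` is monomial if it is induced by a linear character (that is,
a monoid homomorphism to `ℂ`) of some subgroup `H ≤ G`. -/
def IsMonomialChar {G : Type} [Group G] [Finite G] (χ : G → ℂ) : Prop :=
  ∃ (H : Subgroup G) (lam : H →* ℂ), indChar H ⇑lam = χ

/-- A character `χ` of `G` is quasi-monomial if `λ^G = d·χ` for a linear character `λ` of
some subgroup `H ≤ G` and some positive integer `d`. -/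
def IsQuasiMonomialChar {G : Type} [Group G] [Finite G] (χ : G → ℂ) : Prop :=
  ∃ (H : Subgroup G) (lam : H →* ℂ) (d : ℕ), 0 < d ∧
    indChar H ⇑lam = fun g => (d : ℂ) * χ g

/-- A finite group is monomial if all its irreducible characters are monomial. -/
def IsMonomialGroup (G : Type) [Group G] [Finite G] : Prop :=
  ∀ χ : G → ℂ, IsIrreducibleChar G χ → IsMonomialChar χ

/-- A finite group is quasi-monomial if all its irreducible characters are quasi-monomial. -/
def IsQuasiMonomialGroup (G : Type) [Group G] [Finite G] : Prop :=
  ∀ χ : G → ℂ, IsIrreducibleChar G χ → IsQuasiMonomialChar χ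

/-- A finite group `G` is almost monomial if for any two distinct irreducible characters
`χ ≠ φ` of `G` there are a subgroup `H ≤ G` and a linear character `λ` of `H` such that
`χ` is a constituent of `λ^G` and `φ` is not. -/
def IsAlmostMonomialGroup (G : Type) [Group G] [Finite G] : Prop :=
  ∀ χ φ : G → ℂ, IsIrreducibleChar G χ → IsIrreducibleChar G φ → χ ≠ φ →
    ∃ (H : Subgroup G) (lam : H →* ℂ),
      IsConstituent G (indChar H ⇑lam) χ ∧ ¬ IsConstituent G (indChar H ⇑lam) φ

/-!
Let `V` be a simple representation of `G₁ × G₂` and let `U₁`, `U₂` be simple subrepresentations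
of its restrictions to `G₁` and `G₂`. The class sum of `w ∈ G₁` (computed in `G₁`) commutes with
all of `G₁ × G₂`, so by Schur it acts on `V` by a scalar, which can be read off on `U₁`; taking
the trace of this class sum times `(1, b)` gives `χ(a, b) = χ₁(a) χ(1, b) / χ₁(1)`, and
symmetrically in the second factor. Hence `χ = r · χ₁ × χ₂` with `r = χ(1) / (χ₁(1) χ₂(1))`;
since irreducible characters have norm one, `r² = 1`, and as `r` is a ratio of dimensions, `r = 1`.
Finally, if `λᵢ^{Gᵢ} = dᵢ χᵢ` then `(λ₁ × λ₂)` induced from `H₁ × H₂` is `d₁ d₂ χ`.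
-/

open CategoryTheory Limits Module

namespace FDRep

variable {k : Type} [Field k]

section Monoid

variable {G K : Type} [Monoid G] [Monoid K]

lemma hom_injective_of_mono {V W : FDRep k G} (f : V ⟶ W) [Mono f] :
    Function.Injective f.hom.hom.hom :=
  (Rep.mono_iff_injective ((forget₂ (FDRep k G) (Rep k G)).map f)).1 inferInstance

instance (V : FDRep k G) : IsArtinianObject V := by
  rw [IsArtinianObject, ObjectProperty.is_iff, isArtinianObject]
  refine StrictMono.wellFoundedLT (f := fun Y : Subobject V => finrank k (Y : FDRep k G)) ?_
  intro Y Z hYZ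
  have hinj := hom_injective_of_mono (Subobject.ofLE Y Z hYZ.le)
  refine (LinearMap.finrank_le_finrank_of_injective hinj).lt_of_ne fun heq => hYZ.not_ge ?_
  have : IsIso (Subobject.ofLE Y Z hYZ.le) := (ConcreteCategory.isIso_iff_bijective _).2
    ⟨hinj, (LinearMap.injective_iff_surjective_of_finrank_eq_finrank heq).1 hinj⟩
  exact Subobject.le_of_comm (inv (Subobject.ofLE Y Z hYZ.le)) (by simp)

lemma exists_simple_mono_res (φ : K →* G) (V : FDRep k G) [Simple V] :
    ∃ (U : FDRep k K) (ι : U ⟶ (Action.res _ φ).obj V), Simple U ∧ Mono ι := by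
  have hV : ¬IsZero ((Action.res _ φ).obj V) := by
    rw [IsZero.iff_id_eq_zero]
    intro h
    have h' := congrArg Action.Hom.hom h
    exact id_nonzero V (Action.hom_ext _ _ h')
  obtain ⟨U, hU⟩ := exists_simple_subobject hV
  exact ⟨U, U.arrow, hU, inferInstance⟩

lemma nontrivial_of_simple (V : FDRep k G) [Simple V] : Nontrivial V := by
  refine not_subsingleton_iff_nontrivial.1 fun _ => id_nonzero V (Action.hom_ext _ _ ?_)
  ext v
  exact Subsingleton.elim _ _

lemma character_one_ne_zero [CharZero k] (V : FDRep k G) [Simple V] : V.character 1 ≠ 0 := by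
  have := nontrivial_of_simple V
  rw [char_one]
  exact_mod_cast finrank_pos.ne'

lemma exists_eq_smul_id_of_commute [IsAlgClosed k] (V : FDRep k G) [Simple V] (f : V →ₗ[k] V)
    (hf : ∀ g, f ∘ₗ V.ρ g = V.ρ g ∘ₗ f) : ∃ c : k, f = c • LinearMap.id := by
  let F : V ⟶ V := ⟨FGModuleCat.ofHom f, fun g => by ext v; exact LinearMap.congr_fun (hf g) v⟩
  obtain ⟨c, hc⟩ := endomorphism_simple_eq_smul_id k F
  exact ⟨c, by ext v; exact congr(($hc).hom.hom v).symm⟩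

end Monoid

variable {G K : Type} [Group G] [Group K] [Fintype K]

lemma sum_ρ_conj_comp_comm (φ : K →* G) (hφ : ∀ g, ∃ y, ∀ x, g * φ x * g⁻¹ = φ (y * x * y⁻¹))
    (V : FDRep k G) (w : K) (g : G) :
    (∑ x, V.ρ (φ (x * w * x⁻¹))) ∘ₗ V.ρ g = V.ρ g ∘ₗ ∑ x, V.ρ (φ (x * w * x⁻¹)) := by
  obtain ⟨y, hy⟩ := hφ g
  simp only [← Module.End.mul_eq_comp, Finset.sum_mul, Finset.mul_sum, ← map_mul]
  refine Fintype.sum_equiv (Equiv.mulLeft y⁻¹) _ _ fun x => ?_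
  have hx := hy (y⁻¹ * x * w * (y⁻¹ * x)⁻¹)
  rw [show y * (y⁻¹ * x * w * (y⁻¹ * x)⁻¹) * y⁻¹ = x * w * x⁻¹ by group] at hx
  rw [Equiv.coe_mulLeft, ← hx]
  group

lemma sum_ρ_conj_eq_smul [IsAlgClosed k] [CharZero k] (U : FDRep k K) [Simple U] (w : K) :
    ∑ x, U.ρ (x * w * x⁻¹) = (Fintype.card K * U.character w / U.character 1) • LinearMap.id := by
  obtain ⟨c, hc⟩ := exists_eq_smul_id_of_commute U _
    (sum_ρ_conj_comp_comm (MonoidHom.id K) (fun g => ⟨g, fun _ => rfl⟩) U w)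
  simp only [MonoidHom.id_apply] at hc
  have htrace : Fintype.card K * U.character w = c * U.character 1 := calc
    _ = ∑ x, U.character (x * w * x⁻¹) := by simp
    _ = LinearMap.trace k U (c • LinearMap.id) := by rw [← hc, map_sum]; rfl
    _ = c * U.character 1 := by simp [char_one]
  rw [hc, htrace, mul_div_cancel_right₀ _ (character_one_ne_zero U)]

lemma sum_ρ_conj_eq_smul_of_mono [IsAlgClosed k] [CharZero k] (φ : K →* G)
    (hφ : ∀ g, ∃ y, ∀ x, g * φ x * g⁻¹ = φ (y * x * y⁻¹)) (V : FDRep k G) [Simple V]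
    (U : FDRep k K) [Simple U] (ι : U ⟶ (Action.res _ φ).obj V) [Mono ι] (w : K) :
    ∑ x, V.ρ (φ (x * w * x⁻¹)) =
      (Fintype.card K * U.character w / U.character 1) • LinearMap.id := by
  obtain ⟨c, hc⟩ := exists_eq_smul_id_of_commute V _ (sum_ρ_conj_comp_comm φ hφ V w)
  have := nontrivial_of_simple U
  obtain ⟨u, hu⟩ := exists_ne (0 : U)
  let j : U →ₗ[k] V := ι.hom.hom.hom
  have hju : j u ≠ 0 := fun h => hu (hom_injective_of_mono ι (h.trans (map_zero j).symm))
  have hj : ∀ x, j (U.ρ x u) = V.ρ (φ x) (j u) := fun x => congr(($(ι.comm x)).hom u)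
  rw [hc]
  congr 1
  refine smul_left_injective k hju ?_
  calc c • j u = (∑ x, V.ρ (φ (x * w * x⁻¹))) (j u) := by rw [hc]; rfl
    _ = j ((∑ x, U.ρ (x * w * x⁻¹)) u) := by simp only [LinearMap.sum_apply, map_sum, hj]
    _ = (Fintype.card K * U.character w / U.character 1) • j u := by
      rw [sum_ρ_conj_eq_smul]; simp

lemma character_mul_of_commute [IsAlgClosed k] [CharZero k] (φ : K →* G)
    (hφ : ∀ g, ∃ y, ∀ x, g * φ x * g⁻¹ = φ (y * x * y⁻¹)) (V : FDRep k G) [Simple V]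
    (U : FDRep k K) [Simple U] (ι : U ⟶ (Action.res _ φ).obj V) [Mono ι] (w : K) {g : G}
    (hg : ∀ x, Commute (φ x) g) :
    V.character (φ w * g) = U.character w / U.character 1 * V.character g := by
  have hconj : ∀ x, φ (x * w * x⁻¹) * g = φ x * (φ w * g) * (φ x)⁻¹ := fun x => by
    rw [map_mul, map_mul, map_inv, mul_assoc _ (φ x)⁻¹, ← map_inv, (hg x⁻¹).eq]
    group
  refine mul_left_cancel₀ (Nat.cast_ne_zero.2 Fintype.card_ne_zero : (Fintype.card K : k) ≠ 0) ?_
  calc (Fintype.card K : k) * V.character (φ w * g)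
      = ∑ x, V.character (φ (x * w * x⁻¹) * g) := by
        simp only [hconj, char_conj, Finset.sum_const, Finset.card_univ, nsmul_eq_mul]
    _ = LinearMap.trace k V ((∑ x, V.ρ (φ (x * w * x⁻¹))) * V.ρ g) := by
        simp only [Finset.sum_mul, map_sum, ← map_mul]
        rfl
    _ = _ := by
        rw [sum_ρ_conj_eq_smul_of_mono φ hφ V U ι, smul_mul_assoc, ← Module.End.one_eq_id, one_mul,
          map_smul, smul_eq_mul, ← character]
        ring

section Prod

variable {G₁ G₂ : Type} [Group G₁] [Group G₂] [Fintype G₁] [Fintype G₂]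

lemma sq_eq_one_of_character_eq_mul [IsAlgClosed k] [CharZero k] (V : FDRep k (G₁ × G₂))
    [Simple V] (V₁ : FDRep k G₁) [Simple V₁] (V₂ : FDRep k G₂) [Simple V₂] {r : k}
    (h : ∀ g, V.character g = r * (V₁.character g.1 * V₂.character g.2)) : r ^ 2 = 1 := by
  have hnorm := (simple_iff_char_is_norm_one V).1 inferInstance
  have hnorm₁ := (simple_iff_char_is_norm_one V₁).1 inferInstance
  have hnorm₂ := (simple_iff_char_is_norm_one V₂).1 inferInstance
  refine mul_right_cancel₀ (by simp : (Nat.card G₁ * Nat.card G₂ : k) ≠ 0) ?_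
  calc r ^ 2 * (Nat.card G₁ * Nat.card G₂ : k)
      = r ^ 2 * ((∑ a, V₁.character a * V₁.character a⁻¹) *
          ∑ b, V₂.character b * V₂.character b⁻¹) := by rw [hnorm₁, hnorm₂]
    _ = ∑ g, V.character g * V.character g⁻¹ := by
        rw [Finset.sum_mul_sum, Finset.mul_sum, Fintype.sum_prod_type]
        simp only [Finset.mul_sum, h, Prod.fst_inv, Prod.snd_inv]
        exact Finset.sum_congr rfl fun a _ => Finset.sum_congr rfl fun b _ => by ring
    _ = 1 * (Nat.card G₁ * Nat.card G₂ : k) := by rw [hnorm, Nat.card_prod]; push_cast; ring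

theorem exists_character_eq_mul [IsAlgClosed k] [CharZero k] (V : FDRep k (G₁ × G₂))
    [Simple V] : ∃ (V₁ : FDRep k G₁) (V₂ : FDRep k G₂), Simple V₁ ∧ Simple V₂ ∧
      ∀ g, V.character g = V₁.character g.1 * V₂.character g.2 := by
  obtain ⟨V₁, ι₁, _, _⟩ := exists_simple_mono_res (MonoidHom.inl G₁ G₂) V
  obtain ⟨V₂, ι₂, _, _⟩ := exists_simple_mono_res (MonoidHom.inr G₁ G₂) V
  have hinl : ∀ g : G₁ × G₂, ∃ y, ∀ x, g * MonoidHom.inl G₁ G₂ x * g⁻¹ =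
      MonoidHom.inl G₁ G₂ (y * x * y⁻¹) := fun g => ⟨g.1, fun x => by ext <;> simp⟩
  have hinr : ∀ g : G₁ × G₂, ∃ y, ∀ x, g * MonoidHom.inr G₁ G₂ x * g⁻¹ =
      MonoidHom.inr G₁ G₂ (y * x * y⁻¹) := fun g => ⟨g.2, fun x => by ext <;> simp⟩
  set r := V.character 1 / (V₁.character 1 * V₂.character 1) with hr
  have hχ : ∀ g : G₁ × G₂, V.character g = r * (V₁.character g.1 * V₂.character g.2) := by
    rintro ⟨a, b⟩
    have h₁ := character_mul_of_commute _ hinl V V₁ ι₁ a (g := (1, b)) fun x => by ext <;> simp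
    have h₂ := character_mul_of_commute _ hinr V V₂ ι₂ b (g := 1) fun x => Commute.one_right _
    simp only [MonoidHom.inl_apply, MonoidHom.inr_apply, Prod.mk_mul_mk, mul_one, one_mul] at h₁ h₂
    rw [h₁, h₂, hr]
    ring
  have hr₁ : r = 1 := by
    refine (sq_eq_one_iff.1 (sq_eq_one_of_character_eq_mul V V₁ V₂ hχ)).resolve_right fun h => ?_
    have h₁ := hχ 1
    simp only [Prod.fst_one, Prod.snd_one, char_one, h] at h₁
    have hdim : ((finrank k V + finrank k V₁ * finrank k V₂ : ℕ) : k) = 0 := by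
      push_cast
      rw [h₁]
      ring
    have := nontrivial_of_simple V
    have := finrank_pos (R := k) (M := V)
    have := Nat.cast_eq_zero.1 hdim
    omega
  exact ⟨V₁, V₂, inferInstance, inferInstance, fun g => by rw [hχ g, hr₁, one_mul]⟩

end Prod

end FDRep

lemma indChar_prod {G₁ G₂ : Type} [Group G₁] [Group G₂] [Finite G₁] [Finite G₂]
    (H₁ : Subgroup G₁) (H₂ : Subgroup G₂) (θ₁ : H₁ → ℂ) (θ₂ : H₂ → ℂ) (g : G₁ × G₂) :
    indChar (H₁.prod H₂)
        (fun h => θ₁ (Subgroup.prodEquiv H₁ H₂ h).1 * θ₂ (Subgroup.prodEquiv H₁ H₂ h).2) g =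
      indChar H₁ θ₁ g.1 * indChar H₂ θ₂ g.2 := by
  have := Fintype.ofFinite G₁
  have := Fintype.ofFinite G₂
  have hsummand : ∀ y : G₁ × G₂,
      (if h : y ∈ H₁.prod H₂ then
        θ₁ (Subgroup.prodEquiv H₁ H₂ ⟨y, h⟩).1 * θ₂ (Subgroup.prodEquiv H₁ H₂ ⟨y, h⟩).2 else 0) =
      (if h : y.1 ∈ H₁ then θ₁ ⟨y.1, h⟩ else 0) * (if h : y.2 ∈ H₂ then θ₂ ⟨y.2, h⟩ else 0) := by
    intro y
    by_cases h : y ∈ H₁.prod H₂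
    · rw [dif_pos h, dif_pos (Subgroup.mem_prod.1 h).1, dif_pos (Subgroup.mem_prod.1 h).2]
      rfl
    · rw [dif_neg h]
      rcases not_and_or.1 (Subgroup.mem_prod.not.1 h) with h | h <;> simp [h]
  simp only [indChar, finsum_eq_sum_of_fintype, hsummand, Fintype.sum_prod_type, Prod.fst_mul,
    Prod.snd_mul, Prod.fst_inv, Prod.snd_inv]
  rw [Nat.card_congr (Subgroup.prodEquiv H₁ H₂).toEquiv, Nat.card_prod, mul_mul_mul_comm,
    Finset.sum_mul_sum, Nat.cast_mul, mul_inv]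

/-- If `G₁` and `G₂` are quasi-monomial finite groups, then `G₁ × G₂` is quasi-monomial. -/
theorem quasiMonomialGroup_prod (G₁ G₂ : Type) [Group G₁] [Group G₂] [Finite G₁] [Finite G₂]
    (h₁ : IsQuasiMonomialGroup G₁) (h₂ : IsQuasiMonomialGroup G₂) :
    IsQuasiMonomialGroup (G₁ × G₂) := by
  have := Fintype.ofFinite G₁
  have := Fintype.ofFinite G₂
  rintro _ ⟨V, hV, rfl⟩
  obtain ⟨V₁, V₂, hV₁, hV₂, hχ⟩ := FDRep.exists_character_eq_mul V
  obtain ⟨H₁, lam₁, d₁, hd₁, hind₁⟩ := h₁ V₁.character ⟨V₁, hV₁, rfl⟩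
  obtain ⟨H₂, lam₂, d₂, hd₂, hind₂⟩ := h₂ V₂.character ⟨V₂, hV₂, rfl⟩
  refine ⟨H₁.prod H₂, (lam₁.coprod lam₂).comp (Subgroup.prodEquiv H₁ H₂).toMonoidHom, d₁ * d₂,
    Nat.mul_pos hd₁ hd₂, funext fun g => ?_⟩
  calc indChar (H₁.prod H₂) _ g = indChar H₁ lam₁ g.1 * indChar H₂ lam₂ g.2 :=
        indChar_prod H₁ H₂ lam₁ lam₂ g
    _ = (d₁ * d₂ : ℕ) * V.character g := by
        rw [hind₁, hind₂, hχ]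
        push_cast
        ring
end
end

section
/- If G is an almost monomial finite group and N is a normal subgroup of G, then the quotient group G/N is almost monomial. -/
open scoped Classical

noncomputable section

/-!
The irreducible characters of `G ⧸ N` inflate to irreducible characters of `G`: inflation
preserves the norm `⟨χ, χ⟩`, and norm one characterises irreducibility. Distinct characters stay
distinct, so some `λ^G` with `λ` linear on `H ≤ G` separates the inflations of `χ` and `φ`. By
Frobenius reciprocity `λ` is trivial on `H ⊓ N`, for otherwise it is orthogonal to every function
on `H` that is constant on the cosets of `H ⊓ N`. Hence `λ` descends to a linear character `λ'`
of the image of `H` in `G ⧸ N`, and Frobenius reciprocity on both sides gives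
`⟨λ'^(G/N), ψ⟩ = ⟨λ^G, ψ ∘ π⟩` for every class function `ψ` of `G ⧸ N`.
-/

open CategoryTheory Function Finset ComplexConjugate

universe u

theorem MonoidHom.sum_comp_of_surjective {A B M : Type*} [Group A] [Group B] [Fintype A]
    [Fintype B] [AddCommMonoid M] {p : A →* B} (hp : Surjective p) (f : B → M) :
    ∑ a, f (p a) = Nat.card p.ker • ∑ b, f b := by
  classical
  have hfiber (b : B) : #{a | p a = b} = Nat.card p.ker := by
    rw [MonoidHom.card_fiber_eq_of_mem_range p (hp b) ⟨1, map_one p⟩, ← Fintype.card_subtype,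
      ← Nat.card_eq_fintype_card]
    rfl
  rw [Finset.sum_comp, Finset.image_univ_of_surjective hp, Finset.smul_sum]
  simp only [hfiber]

theorem MonoidHom.card_eq_card_ker_mul_of_surjective {A B : Type*} [Group A] [Group B]
    {p : A →* B} (hp : Surjective p) : Nat.card A = Nat.card p.ker * Nat.card B := by
  rw [← p.ker.card_mul_index, Subgroup.index_ker, MonoidHom.range_eq_top.mpr hp,
    Subgroup.card_top]

theorem Fintype.sum_dite_eq_sum_subtype {α M : Type*} [Fintype α] [AddCommMonoid M]
    (p : α → Prop) [DecidablePred p] (F : Subtype p → M) :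
    ∑ a, (if h : p a then F ⟨a, h⟩ else 0) = ∑ x : Subtype p, F x := by
  have hneg : ∑ a : {a // ¬ p a}, (if h : p a then F ⟨a, h⟩ else 0) = 0 :=
    Finset.sum_eq_zero fun a _ => dif_neg a.2
  rw [← Fintype.sum_subtype_add_sum_subtype p, hneg, add_zero]
  exact Finset.sum_congr rfl fun a _ => dif_pos a.2

theorem MonoidHom.exists_comp_eq_of_ker_le {A B M : Type*} [Group A] [Group B] [Monoid M]
    {p : A →* B} (hp : Surjective p) (f : A →* M) (hf : p.ker ≤ f.ker) :
    ∃ f' : B →* M, ∀ a, f' (p a) = f a :=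
  ⟨(QuotientGroup.lift p.ker f hf).comp
      (QuotientGroup.quotientKerEquivOfSurjective p hp).symm.toMonoidHom,
    fun a => by
      have : (QuotientGroup.quotientKerEquivOfSurjective p hp).symm (p a) = a :=
        (MulEquiv.symm_apply_eq _).mpr rfl
      simp [this]⟩

def IsClassFunction {G M : Type*} [Group G] (f : G → M) : Prop :=
  ∀ x g : G, f (x * g * x⁻¹) = f g

theorem IsClassFunction.comp {G Q M : Type*} [Group G] [Group Q] {f : Q → M}
    (hf : IsClassFunction f) (π : G →* Q) : IsClassFunction (f ∘ π) := fun x g => by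
  simp only [Function.comp_apply, map_mul, map_inv]
  exact hf (π x) (π g)

theorem FDRep.isClassFunction_character {k G : Type u} [Field k] [Group G] (V : FDRep k G) :
    IsClassFunction V.character :=
  fun x g => V.char_conj g x

theorem charInner_indChar {G : Type} [Group G] [Finite G] (H : Subgroup G) (θ : H → ℂ)
    {f : G → ℂ} (hf : IsClassFunction f) :
    charInner G (indChar H θ) f = charInner H θ (fun h => f h) := by
  cases nonempty_fintype G
  have hG : (Nat.card G : ℂ) ≠ 0 := Nat.cast_ne_zero.mpr Nat.card_pos.ne'
  set θ₀ : G → ℂ := fun g => if h : g ∈ H then θ ⟨g, h⟩ else 0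
  have hconj (x : G) : ∑ g, θ₀ (x * g * x⁻¹) * conj (f g) = ∑ g, θ₀ g * conj (f g) :=
    Fintype.sum_equiv (MulAut.conj x).toEquiv _ _ fun g => by simp [hf x g]
  have hres : ∑ g, θ₀ g * conj (f g) = ∑ h : H, θ h * conj (f h) := by
    simp only [θ₀, dite_mul, zero_mul]
    exact Fintype.sum_dite_eq_sum_subtype (· ∈ H) fun h => θ h * conj (f h)
  unfold charInner indChar
  simp only [finsum_eq_sum_of_fintype]
  calc (Nat.card G : ℂ)⁻¹ * ∑ g, (Nat.card H : ℂ)⁻¹ * (∑ x, θ₀ (x * g * x⁻¹)) * conj (f g)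
      = (Nat.card G : ℂ)⁻¹ * (Nat.card H : ℂ)⁻¹ * ∑ x, ∑ g, θ₀ (x * g * x⁻¹) * conj (f g) := by
        simp only [Finset.mul_sum, Finset.sum_mul]
        rw [Finset.sum_comm]
        simp only [mul_assoc]
    _ = (Nat.card H : ℂ)⁻¹ * ∑ h : H, θ h * conj (f h) := by
        simp only [hconj, hres, Finset.sum_const, Finset.card_univ, nsmul_eq_mul,
          Nat.card_eq_fintype_card]
        field_simp

theorem charInner_comp {A B : Type} [Group A] [Group B] [Finite A] [Finite B] {p : A →* B}
    (hp : Surjective p) (u v : B → ℂ) : charInner A (u ∘ p) (v ∘ p) = charInner B u v := by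
  cases nonempty_fintype A
  cases nonempty_fintype B
  have hker : (Nat.card p.ker : ℂ) ≠ 0 := Nat.cast_ne_zero.mpr Nat.card_pos.ne'
  have hB : (Nat.card B : ℂ) ≠ 0 := Nat.cast_ne_zero.mpr Nat.card_pos.ne'
  unfold charInner
  simp only [finsum_eq_sum_of_fintype, Function.comp_apply]
  rw [p.sum_comp_of_surjective hp fun b => u b * conj (v b),
    p.card_eq_card_ker_mul_of_surjective hp, nsmul_eq_mul, Nat.cast_mul]
  field_simp

theorem charInner_eq_zero_of_mul_right_invariant {A : Type} [Group A] [Finite A] (lam : A →* ℂ)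
    {f : A → ℂ} {k : A} (hk : lam k ≠ 1) (hf : ∀ a, f (a * k) = f a) : charInner A lam f = 0 := by
  cases nonempty_fintype A
  have hshift : lam k * ∑ a, lam a * conj (f a) = ∑ a, lam a * conj (f a) := by
    rw [Finset.mul_sum]
    refine Fintype.sum_equiv (Equiv.mulRight k) _ _ fun a => ?_
    simp only [Equiv.coe_mulRight, map_mul, hf]
    ring
  unfold charInner
  rw [finsum_eq_sum_of_fintype, (mul_left_eq_self₀.mp hshift).resolve_left hk, mul_zero]

theorem IsIrreducibleChar.isClassFunction {G : Type} [Group G] {χ : G → ℂ}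
    (hχ : IsIrreducibleChar G χ) : IsClassFunction χ := by
  obtain ⟨V, -, rfl⟩ := hχ
  exact V.isClassFunction_character

theorem FDRep.simple_comp_iff {k G Q : Type u} [Field k] [IsAlgClosed k] [CharZero k]
    [Group G] [Group Q] [Fintype G] [Fintype Q] {π : G →* Q} (hπ : Surjective π)
    (V : FDRep k Q) : Simple (FDRep.of (V.ρ.comp π)) ↔ Simple V := by
  rw [simple_iff_char_is_norm_one, simple_iff_char_is_norm_one,
    π.card_eq_card_ker_mul_of_surjective hπ, Nat.cast_mul, ← nsmul_eq_mul]
  change ∑ g, V.character (π g) * V.character (π g⁻¹) = _ ↔ _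
  simp only [map_inv]
  rw [π.sum_comp_of_surjective hπ fun q => V.character q * V.character q⁻¹]
  exact (smul_right_injective k (Nat.card_pos.ne')).eq_iff

theorem IsIrreducibleChar.comp {G Q : Type} [Group G] [Group Q] [Finite G] {π : G →* Q}
    (hπ : Surjective π) {χ : Q → ℂ} (hχ : IsIrreducibleChar Q χ) :
    IsIrreducibleChar G (χ ∘ π) := by
  obtain ⟨V, hV, rfl⟩ := hχ
  cases nonempty_fintype G
  have : Fintype Q := Fintype.ofSurjective π hπ
  exact ⟨FDRep.of (V.ρ.comp π), (FDRep.simple_comp_iff hπ V).mpr hV, rfl⟩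

theorem ker_subgroupMap_le_ker_of_isConstituent {G Q : Type} [Group G] [Group Q] [Finite G]
    (π : G →* Q) {H : Subgroup G} (lam : H →* ℂ) {w : Q → ℂ} (hw : IsClassFunction w)
    (hH : IsConstituent G (indChar H lam) (w ∘ π)) : (π.subgroupMap H).ker ≤ lam.ker := by
  intro k hk
  have hπk : π k = 1 := congrArg Subtype.val hk
  by_contra hlam
  apply hH
  rw [charInner_indChar H lam (hw.comp π)]
  refine charInner_eq_zero_of_mul_right_invariant lam hlam fun a => ?_
  simp [hπk]

theorem charInner_indChar_map {G Q : Type} [Group G] [Group Q] [Finite G] [Finite Q]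
    {π : G →* Q} {H : Subgroup G} {lam : H →* ℂ} {lam' : H.map π →* ℂ}
    (hlam : ∀ h, lam' (π.subgroupMap H h) = lam h) {w : Q → ℂ} (hw : IsClassFunction w) :
    charInner Q (indChar (H.map π) lam') w = charInner G (indChar H lam) (w ∘ π) := by
  rw [charInner_indChar _ _ hw, charInner_indChar _ _ (hw.comp π),
    ← charInner_comp (π.subgroupMap_surjective H)]
  congr 1
  exact funext hlam

/-- If `G` is almost monomial and `N ⊴ G`, then `G/N` is almost monomial. -/
theorem quotient_almostMonomial (G : Type) [Group G] [Finite G]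
    (N : Subgroup G) [N.Normal] (h : IsAlmostMonomialGroup G) :
    IsAlmostMonomialGroup (G ⧸ N) := by
  intro χ φ hχ hφ hne
  set π := QuotientGroup.mk' N
  have hπ : Surjective π := QuotientGroup.mk'_surjective N
  obtain ⟨H, lam, hχH, hφH⟩ :=
    h (χ ∘ π) (φ ∘ π) (hχ.comp hπ) (hφ.comp hπ) (hπ.injective_comp_right.ne hne)
  obtain ⟨lam', hlam'⟩ := MonoidHom.exists_comp_eq_of_ker_le (π.subgroupMap_surjective H) lam
    (ker_subgroupMap_le_ker_of_isConstituent π lam hχ.isClassFunction hχH)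
  refine ⟨H.map π, lam', ?_, ?_⟩
  · rwa [IsConstituent, charInner_indChar_map hlam' hχ.isClassFunction]
  · rwa [IsConstituent, charInner_indChar_map hlam' hφ.isClassFunction]
end
end

section
/- Let p be a positive integer and let θ_1, …, θ_p and η_1, …, η_p be elements of a set S, with indices read modulo p (so θ_{j+p} = θ_j and η_{j+p} = η_j). Assume that for every cyclic shift σ in the cyclic group generated by the p-cycle (1 2 … p) the tuples (θ_1, …, θ_p) and (η_{σ(1)}, …, η_{σ(p)}) are distinct. Then there exist an integer s with 1 ≤ s ≤ p, pairwise distinct indices i_1, …, i_s in {1, …, p}, and positive integers j_1, …, j_s with j_1 + ⋯ + j_s = p, such that for every ℓ with 1 ≤ ℓ ≤ p there exists t with 1 ≤ t ≤ s satisfying θ_{i_t} ≠ η_{i_t + ℓ − 1}. -/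
/-- Let `θ_1, …, θ_p` and `η_1, …, η_p` be elements of a set `S`, indices read modulo `p`.
If `(θ_1, …, θ_p)` differs from every cyclic rotation of `(η_1, …, η_p)`, then there exist
`1 ≤ s ≤ p`, pairwise distinct indices `i_1, …, i_s` and positive integers `j_1, …, j_s`
with `j_1 + ⋯ + j_s = p`, such that for every `1 ≤ ℓ ≤ p` there is `t` with
`θ_{i_t} ≠ η_{i_t + ℓ - 1}`. -/
theorem exists_distinguishing_indices (p : ℕ) (hp : 0 < p) (S : Type*)
    (θ η : ZMod p → S)
    (hdist : ∀ k : ZMod p, θ ≠ fun j => η (j + k)) :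
    ∃ s : ℕ, 1 ≤ s ∧ s ≤ p ∧
      ∃ (i : Fin s → ZMod p) (j : Fin s → ℕ),
        Function.Injective i ∧ (∀ t, 0 < j t) ∧ (∑ t, j t) = p ∧
        ∀ ℓ : ℕ, 1 ≤ ℓ → ℓ ≤ p →
          ∃ t : Fin s, θ (i t) ≠ η (i t + ((ℓ - 1 : ℕ) : ZMod p)) := by
  haveI : NeZero p := ⟨hp.ne'⟩
  -- choose a witness index for each shift
  have hw : ∀ k : ZMod p, ∃ j : ZMod p, θ j ≠ η (j + k) := by
    intro k
    by_contra h
    push_neg at h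
    exact hdist k (funext h)
  choose w hwspec using hw
  set F : Finset (ZMod p) := Finset.image w Finset.univ with hF
  set s : ℕ := F.card with hs
  have hFne : F.Nonempty := (Finset.univ_nonempty).image w
  refine ⟨s, Finset.card_pos.mpr hFne, ?_, ?_⟩
  · calc s ≤ (Finset.univ : Finset (ZMod p)).card := Finset.card_image_le
      _ = p := by simp [ZMod.card]
  · set e : F ≃ Fin s := F.equivFin with he
    refine ⟨fun t => (e.symm t : ZMod p),
      fun t => (Finset.univ.filter (fun k => w k = (e.symm t : ZMod p))).card,
      ?_, ?_, ?_, ?_⟩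
    · intro a b hab
      exact e.symm.injective (Subtype.ext hab)
    · intro t
      obtain ⟨k, -, hk⟩ := Finset.mem_image.mp (e.symm t).2
      exact Finset.card_pos.mpr ⟨k, by simp [hk]⟩
    · have h1 : (Finset.univ : Finset (ZMod p)).card
          = ∑ a ∈ F, (Finset.univ.filter (fun k => w k = a)).card :=
        Finset.card_eq_sum_card_fiberwise (fun x _ => Finset.mem_image_of_mem w (Finset.mem_univ x))
      have h2 : ∑ t : Fin s, (Finset.univ.filter (fun k => w k = (e.symm t : ZMod p))).card
          = ∑ a ∈ F, (Finset.univ.filter (fun k => w k = a)).card := by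
        rw [← Finset.sum_attach F (fun a => (Finset.univ.filter (fun k => w k = a)).card)]
        exact Fintype.sum_equiv e.symm _ _ (fun t => rfl)
      rw [h2, ← h1]
      simp [ZMod.card]
    · intro ℓ _ _
      set k : ZMod p := ((ℓ - 1 : ℕ) : ZMod p)
      have hmem : w k ∈ F := Finset.mem_image_of_mem w (Finset.mem_univ k)
      refine ⟨e ⟨w k, hmem⟩, ?_⟩
      simpa using hwspec k
end
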